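/- Let M be a simple rank-3 matroid on [d] and let X ⊆ [d] be a nonempty subset that does not contain a cycle. Then there exists a point x ∈ X such that at most one line of M through x meets X \ {x}, i.e. |{l : l is a line of M, x ∈ l, l ∩ (X \ {x}) ≠ ∅}| ≤ 1. -/

import Mathlib

/-- A point-line "pre-matroid": a ground set together with an independence predicate.
The matroid axioms are stated separately as `PLM.IsMatroid`. -/
structure PLM (α : Type) where
  E : Set α
  Indep : Set α → Prop

namespace PLM

variable {α : Type}

/-- The matroid axioms: finite ground set, the empty set is independent, independent sets
are contained in the ground set, hereditary property, and the exchange property. -/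
def IsMatroid (M : PLM α) : Prop :=
  M.E.Finite ∧ M.Indep ∅ ∧ (∀ I, M.Indep I → I ⊆ M.E) ∧
    (∀ I J, M.Indep J → I ⊆ J → M.Indep I) ∧
    (∀ I J, M.Indep I → M.Indep J → I.ncard < J.ncard → ∃ e ∈ J \ I, M.Indep (insert e I))

/-- A matroid is simple if every subset of the ground set of size at most 2 is independent. -/
def Simple (M : PLM α) : Prop := ∀ S ⊆ M.E, S.ncard ≤ 2 → M.Indep S

/-- Rank at most three: every independent set has at most 3 elements. -/
def RankLE3 (M : PLM α) : Prop := ∀ I, M.Indep I → I.ncard ≤ 3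

/-- Rank exactly three. -/
def RankEq3 (M : PLM α) : Prop := M.RankLE3 ∧ ∃ I, M.Indep I ∧ I.ncard = 3

/-- The property of being a dependent subset of the ground set all of whose
3-element subsets are dependent. -/
def LinePre (M : PLM α) (l : Set α) : Prop :=
  l ⊆ M.E ∧ ¬ M.Indep l ∧ ∀ t ⊆ l, t.ncard = 3 → ¬ M.Indep t

/-- A line: a maximal dependent subset of the ground set in which every
3-element subset is dependent. -/
def IsLine (M : PLM α) (l : Set α) : Prop :=
  M.LinePre l ∧ ∀ l', M.LinePre l' → l ⊆ l' → l' = l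

/-- The degree of a point: the number of lines containing it. -/
noncomputable def degree (M : PLM α) (p : α) : ℕ :=
  {l : Set α | M.IsLine l ∧ p ∈ l}.ncard

/-- Restriction of `M` to a subset `X` of the ground set. -/
def restrict (M : PLM α) (X : Set α) : PLM α :=
  ⟨M.E ∩ X, fun I => M.Indep I ∧ I ⊆ X⟩

/-- The matroid `M(J)` obtained from `M` by turning every point of `J` into a loop:
a set is independent iff it is an independent set of `M` contained in `E \ J`. -/
def loopify (M : PLM α) (J : Set α) : PLM α :=
  ⟨M.E, fun I => M.Indep I ∧ I ⊆ M.E \ J⟩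

/-- One step of the nilpotency chain: restrict to the set `S_M` of points of degree at least 2. -/
noncomputable def Sstep (M : PLM α) : PLM α :=
  M.restrict {p ∈ M.E | 2 ≤ M.degree p}

/-- `M` is nilpotent if iterating `Sstep` eventually reaches the empty ground set. -/
def Nilpotent (M : PLM α) : Prop := ∃ n : ℕ, (PLM.Sstep^[n] M).E = (∅ : Set α)

/-- `Q_M`: the set of points of degree at least 3. -/
def Qset (M : PLM α) : Set α := {p ∈ M.E | 3 ≤ M.degree p}

/-- A circuit: a minimal dependent subset of the ground set. -/
def Circuit (M : PLM α) (C : Set α) : Prop :=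
  C ⊆ M.E ∧ ¬ M.Indep C ∧ ∀ C', C' ⊂ C → M.Indep C'

end PLM

/-! Realization spaces for matroids on `Fin d`, with configurations in `ℂ^{3d}`. -/

/-- A point of `ℂ^{3d}`, viewed as `d` vectors in `ℂ³`. -/
abbrev Config (d : ℕ) := Fin d × Fin 3 → ℂ

/-- The `i`-th vector of a configuration. -/
def cvec {d : ℕ} (γ : Config d) (i : Fin d) : Fin 3 → ℂ := fun j => γ (i, j)

/-- The family of vectors indexed by `S` is linearly dependent. -/
def LinDep {d : ℕ} (γ : Config d) (S : Set (Fin d)) : Prop :=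
  ¬ LinearIndependent ℂ (fun i : S => cvec γ i)

/-- The realization space `Γ_M ⊆ ℂ^{3d}`: tuples such that a subset of the ground set is
dependent iff the corresponding vectors are linearly dependent. -/
def realizationSpace {d : ℕ} (M : PLM (Fin d)) : Set (Config d) :=
  {γ | ∀ S ⊆ M.E, (¬ M.Indep S ↔ LinDep γ S)}

/-- The circuit variety `V_{C(M)}`: tuples whose vectors satisfy all dependencies of `M`. -/
def circuitVariety {d : ℕ} (M : PLM (Fin d)) : Set (Config d) :=
  {γ | ∀ S ⊆ M.E, ¬ M.Indep S → LinDep γ S}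

/-- The matroid variety `V_M`: the Zariski closure of the realization space, i.e. the zero
locus of the vanishing ideal of `Γ_M` in the polynomial ring in `3d` variables. -/
noncomputable def matroidVariety {d : ℕ} (M : PLM (Fin d)) : Set (Config d) :=
  MvPolynomial.zeroLocus ℂ (MvPolynomial.vanishingIdeal ℂ (realizationSpace M))


/-- A subset `X` of the ground set contains a cycle: there are `k ≥ 3` pairwise distinct
points `x_1, …, x_k ∈ X` and pairwise distinct lines `l_1, …, l_k` with
`{x_i, x_{i+1}} ⊆ l_i` (indices mod `k`). -/
def ContainsCycle {d : ℕ} (M : PLM (Fin d)) (X : Set (Fin d)) : Prop :=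
  ∃ m : ℕ, ∃ (x : Fin (m + 3) → Fin d) (l : Fin (m + 3) → Set (Fin d)),
    Function.Injective x ∧ Function.Injective l ∧
    (∀ i, x i ∈ X) ∧ (∀ i, M.IsLine (l i)) ∧
    (∀ i : Fin (m + 3), x i ∈ l i ∧ x (i + 1) ∈ l i)

/-!
Take a longest path `x₀, l₀, x₁, …, lₙ₋₁, xₙ` in `X` (distinct points of `X`, distinct lines,
consecutive points on the line between them). Any line `L ≠ lₙ₋₁` through `xₙ` meeting
`X \ {xₙ}` in some `y` would either extend the path (if `L` and `y` are new) or close it into a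
cycle (if `y = xⱼ` or `L = lⱼ`). A closed path has at least three lines because two distinct
lines of a simple matroid share at most one point.
-/

theorem PLM.IsLine.eq_of_mem_of_mem {α : Type} {M : PLM α} (hmat : M.IsMatroid) (hs : M.Simple)
    {l l' : Set α} (hl : M.IsLine l) (hl' : M.IsLine l') {x y : α} (hxy : x ≠ y)
    (hxl : x ∈ l) (hyl : y ∈ l) (hxl' : x ∈ l') (hyl' : y ∈ l') : l = l' := by
  obtain ⟨-, -, -, hher, haug⟩ := hmat
  have hpair : M.Indep {x, y} :=
    hs _ (Set.pair_subset_iff.2 ⟨hl.1.1 hxl, hl.1.1 hyl⟩) (Set.ncard_pair hxy).le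
  -- An independent triple inside `l ∪ l'` augments `{x, y}` by a third point of `l` or of `l'`.
  have hunion : M.LinePre (l ∪ l') := by
    refine ⟨Set.union_subset hl.1.1 hl'.1.1, fun h => hl.1.2.1 (hher _ _ h Set.subset_union_left),
      fun t ht h3 hti => ?_⟩
    obtain ⟨e, ⟨het, hexy⟩, hind⟩ :=
      haug {x, y} t hpair hti (by rw [Set.ncard_pair hxy, h3]; norm_num)
    simp only [Set.mem_insert_iff, Set.mem_singleton_iff, not_or] at hexy
    have hcard : ({e, x, y} : Set α).ncard = 3 :=
      Set.ncard_eq_three.2 ⟨e, x, y, hexy.1, hexy.2, hxy, rfl⟩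
    rcases ht het with he | he
    · exact hl.1.2.2 _ (Set.insert_subset he (Set.pair_subset hxl hyl)) hcard hind
    · exact hl'.1.2.2 _ (Set.insert_subset he (Set.pair_subset hxl' hyl')) hcard hind
  exact (hl.2 _ hunion Set.subset_union_left).symm.trans (hl'.2 _ hunion Set.subset_union_right)

-- Only the values `x 0, …, x n` and `l 0, …, l (n - 1)` matter.
structure IsPath {d : ℕ} (M : PLM (Fin d)) (X : Set (Fin d)) (n : ℕ) (x : ℕ → Fin d)
    (l : ℕ → Set (Fin d)) : Prop where
  mem : ∀ i ≤ n, x i ∈ X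
  isLine : ∀ i < n, M.IsLine (l i)
  injOn_points : Set.InjOn x (Set.Iic n)
  injOn_lines : Set.InjOn l (Set.Iio n)
  mem_line : ∀ i < n, x i ∈ l i ∧ x (i + 1) ∈ l i

namespace IsPath

variable {d : ℕ} {M : PLM (Fin d)} {X : Set (Fin d)} {n : ℕ} {x : ℕ → Fin d}
  {l : ℕ → Set (Fin d)} {L : Set (Fin d)}

theorem lt_card (hp : IsPath M X n x l) : n < d := by
  have hinj : Function.Injective fun i : Fin (n + 1) => x i := fun i j h =>
    Fin.ext (hp.injOn_points (Set.mem_Iic.2 (Nat.lt_succ_iff.1 i.2))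
      (Set.mem_Iic.2 (Nat.lt_succ_iff.1 j.2)) h)
  simpa using Fintype.card_le_of_injective _ hinj

theorem drop (hp : IsPath M X n x l) {j : ℕ} (hj : j ≤ n) :
    IsPath M X (n - j) (fun i => x (j + i)) (fun i => l (j + i)) where
  mem i hi := hp.mem _ (by omega)
  isLine i hi := hp.isLine _ (by omega)
  injOn_points a ha b hb h := by
    have := hp.injOn_points (Set.mem_Iic.2 (by simp at ha; omega))
      (Set.mem_Iic.2 (by simp at hb; omega)) h
    omega
  injOn_lines a ha b hb h := by
    have := hp.injOn_lines (Set.mem_Iio.2 (by simp at ha; omega))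
      (Set.mem_Iio.2 (by simp at hb; omega)) h
    omega
  mem_line i hi := by simpa only [← add_assoc] using hp.mem_line (j + i) (by omega)

theorem snoc (hp : IsPath M X n x l) (hL : M.IsLine L) (hLnew : ∀ i < n, l i ≠ L)
    {y : Fin d} (hyX : y ∈ X) (hynew : ∀ i ≤ n, x i ≠ y) (hxL : x n ∈ L) (hyL : y ∈ L) :
    IsPath M X (n + 1) (Function.update x (n + 1) y) (Function.update l n L) where
  mem i hi := by
    rcases eq_or_ne i (n + 1) with rfl | hi'
    · simpa using hyX
    · simpa [hi'] using hp.mem i (by omega)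
  isLine i hi := by
    rcases eq_or_ne i n with rfl | hi'
    · simpa using hL
    · simpa [hi'] using hp.isLine i (by omega)
  injOn_points a ha b hb h := by
    simp only [Set.mem_Iic] at ha hb
    simp only [Function.update_apply] at h
    split_ifs at h
    · omega
    · exact absurd h.symm (hynew b (by omega))
    · exact absurd h (hynew a (by omega))
    · exact hp.injOn_points (Set.mem_Iic.2 (by omega)) (Set.mem_Iic.2 (by omega)) h
  injOn_lines a ha b hb h := by
    simp only [Set.mem_Iio] at ha hb
    simp only [Function.update_apply] at h
    split_ifs at h
    · omega
    · exact absurd h.symm (hLnew b (by omega))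
    · exact absurd h (hLnew a (by omega))
    · exact hp.injOn_lines (Set.mem_Iio.2 (by omega)) (Set.mem_Iio.2 (by omega)) h
  mem_line i hi := by
    rcases eq_or_ne i n with rfl | hi'
    · simpa using ⟨hxL, hyL⟩
    · simpa [hi', show i ≠ n + 1 by omega] using hp.mem_line i (by omega)

theorem containsCycle_of_closing_line (hmat : M.IsMatroid) (hs : M.Simple)
    (hp : IsPath M X n x l) (hn : 0 < n) (hL : M.IsLine L) (hLnew : ∀ i < n, l i ≠ L)
    (hx₀L : x 0 ∈ L) (hxL : x n ∈ L) : ContainsCycle M X := by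
  obtain rfl | ⟨m, rfl⟩ : n = 1 ∨ ∃ m, n = m + 2 := by
    rcases n with _ | _ | m <;> simp_all
  · have hx₀₁ : x 0 ≠ x 1 := fun h => by simpa using hp.injOn_points (by simp) (by simp) h
    obtain ⟨hx₀l, hx₁l⟩ := hp.mem_line 0 one_pos
    exact absurd (PLM.IsLine.eq_of_mem_of_mem hmat hs (hp.isLine 0 one_pos) hL hx₀₁ hx₀l hx₁l
      hx₀L hxL) (hLnew 0 one_pos)
  · refine ⟨m, fun i => x i, fun i => if i = Fin.last _ then L else l i, ?_, ?_,
      fun i => hp.mem i (by omega), fun i => ?_, fun i => ?_⟩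
    · intro i j h
      exact Fin.ext (hp.injOn_points (Set.mem_Iic.2 (by omega)) (Set.mem_Iic.2 (by omega)) h)
    · intro i j h
      have hi := i.is_le
      have hj := j.is_le
      simp only [Fin.ext_iff, Fin.val_last] at h ⊢
      split_ifs at h
      · omega
      · exact absurd h.symm (hLnew j (by omega))
      · exact absurd h (hLnew i (by omega))
      · exact hp.injOn_lines (Set.mem_Iio.2 (by omega)) (Set.mem_Iio.2 (by omega)) h
    · dsimp only
      split_ifs with h
      · exact hL
      · exact hp.isLine i (by have := i.is_le; simp [Fin.ext_iff] at h; omega)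
    · dsimp only
      rw [Fin.val_add_one]
      split_ifs with h
      · subst h
        exact ⟨hxL, hx₀L⟩
      · exact hp.mem_line i (by have := i.is_le; simp [Fin.ext_iff] at h; omega)

theorem line_eq_last_of_maximal (hmat : M.IsMatroid) (hs : M.Simple) (hX : ¬ ContainsCycle M X)
    (hp : IsPath M X n x l) (hmax : ∀ m x' l', IsPath M X m x' l' → m ≤ n) (hL : M.IsLine L)
    (hxL : x n ∈ L) {y : Fin d} (hyL : y ∈ L) (hyX : y ∈ X) (hy : y ≠ x n) :
    L = l (n - 1) := by
  by_cases hLold : ∃ j < n, l j = L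
  · obtain ⟨j, hj, rfl⟩ := hLold
    by_contra hlast
    have hj' : j + 1 < n := by
      by_contra
      exact hlast (congrArg l (by omega))
    refine hX ((hp.drop hj'.le).containsCycle_of_closing_line hmat hs (by omega)
      (hp.isLine j hj) (fun i hi h => ?_) (by simpa using (hp.mem_line j hj).2)
      (by simpa [hj'.le] using hxL))
    have := hp.injOn_lines (Set.mem_Iio.2 (by omega)) (Set.mem_Iio.2 hj) h
    omega
  push Not at hLold
  by_cases hvisited : ∃ j ≤ n, x j = y
  · obtain ⟨j, hj, rfl⟩ := hvisited
    have hj' : j < n := lt_of_le_of_ne hj (fun h => hy (h ▸ rfl))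
    exact absurd ((hp.drop hj).containsCycle_of_closing_line hmat hs (by omega) hL
      (fun i hi => hLold _ (by omega)) (by simpa using hyL) (by simpa [hj] using hxL)) hX
  push Not at hvisited
  have := hmax _ _ _ (hp.snoc hL hLold hyX hvisited hxL hyL)
  omega

end IsPath

theorem exists_maximal_path {d : ℕ} {M : PLM (Fin d)} {X : Set (Fin d)} (hne : X.Nonempty) :
    ∃ n x l, IsPath M X n x l ∧ ∀ m x' l', IsPath M X m x' l' → m ≤ n := by
  obtain ⟨x₀, hx₀⟩ := hne
  have htrivial : IsPath M X 0 (fun _ => x₀) (fun _ => ∅) :=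
    ⟨fun _ _ => hx₀, by simp, fun a ha b hb _ => by simp_all, by simp, by simp⟩
  set S := {n | ∃ x l, IsPath M X n x l}
  have hbdd : BddAbove S := ⟨d, by rintro n ⟨_, _, hp⟩; exact hp.lt_card.le⟩
  obtain ⟨x, l, hp⟩ := Nat.sSup_mem (⟨0, _, _, htrivial⟩ : S.Nonempty) hbdd
  exact ⟨_, x, l, hp, fun m x' l' hp' => le_csSup hbdd ⟨x', l', hp'⟩⟩

theorem exists_point_with_at_most_one_line_general (d : ℕ) (M : PLM (Fin d))
    (hmat : M.IsMatroid) (hs : M.Simple)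
    (X : Set (Fin d)) (hne : X.Nonempty) (hX : ¬ ContainsCycle M X) :
    ∃ x ∈ X, {l : Set (Fin d) | M.IsLine l ∧ x ∈ l ∧ (l ∩ (X \ {x})).Nonempty}.ncard ≤ 1 := by
  obtain ⟨n, x, l, hp, hmax⟩ := exists_maximal_path (M := M) hne
  refine ⟨x n, hp.mem n le_rfl,
    (Set.ncard_le_ncard ?_ (Set.finite_singleton (l (n - 1)))).trans (Set.ncard_singleton _).le⟩
  rintro L ⟨hL, hxL, y, hyL, hyX, hy⟩
  exact hp.line_eq_last_of_maximal hmat hs hX hmax hL hxL hyL hyX hy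

/-- Let `M` be a simple rank-3 matroid on `[d]` and let `X` be a
nonempty subset of points that does not contain a cycle.  Then there is a point `x ∈ X`
such that at most one line of `M` through `x` meets `X \ {x}`. -/
theorem exists_point_with_at_most_one_line (d : ℕ) (M : PLM (Fin d))
    (hE : M.E = Set.univ) (hmat : M.IsMatroid) (hs : M.Simple) (hrk : M.RankEq3)
    (X : Set (Fin d)) (hne : X.Nonempty) (hX : ¬ ContainsCycle M X) :
    ∃ x ∈ X, {l : Set (Fin d) | M.IsLine l ∧ x ∈ l ∧ (l ∩ (X \ {x})).Nonempty}.ncard ≤ 1 :=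
  exists_point_with_at_most_one_line_general d M hmat hs X hne hX
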